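/- If 1<α<2, then for every b>0 the expected number of increments generated per run is infinite: Σ_{k≥1} p_k(b)·n_k = ∞. -/

import Mathlib

/-!
Regular variation gives `F̄(t x) / F̄(x) → t^(-α)`. Since `α > 1`, eventually
`F̄(2x) ≤ ρ F̄(x)` with `ρ < 1/2`, so `2^k F̄(2^k)` decays geometrically and, by Cauchy
condensation and the integral test, `F̄` is integrable: `F̄_I` is finite and positive.
On the other hand `p_k(b) n_k ≥ (n_k - n_{k-1}) μ F̄(b + n_k μ) n_k / F̄_I(b)`, which is of order
`n_k² F̄(b + n_k μ)`; since `α < 2`, these terms eventually grow geometrically, by a factor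
close to `r^(2-α) > 1`, so the series diverges.
-/

open MeasureTheory ProbabilityTheory Filter

noncomputable section

/-- Right tail `F̄(x) = F((x,∞))` of a measure on `ℝ`, as a real number. -/
def rtail (F : Measure ℝ) (x : ℝ) : ℝ := (F (Set.Ioi x)).toReal

/-- Integrated tail `F̄_I(x) = ∫_x^∞ F̄(u) du`. -/
def rtailI (F : Measure ℝ) (x : ℝ) : ℝ := ∫ u in Set.Ioi x, rtail F u

/-- `L` is slowly varying at infinity. -/
def SlowlyVarying (L : ℝ → ℝ) : Prop :=
  ∀ t > 0, Tendsto (fun x => L (t * x) / L x) atTop (nhds 1)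

/-- The block sizes `n_0 = 0`, `n_k = r^k` for `k ≥ 1`. -/
def nseq (r k : ℕ) : ℕ := if k = 0 then 0 else r ^ k

/-- The randomization probabilities
`p_k(b) = (F̄_I(b + n_{k-1}μ) − F̄_I(b + n_kμ)) / F̄_I(b)`. -/
def pk (F : Measure ℝ) (μ : ℝ) (r k : ℕ) (b : ℝ) : ℝ :=
  (rtailI F (b + (nseq r (k - 1) : ℝ) * μ) - rtailI F (b + (nseq r k : ℝ) * μ)) /
    rtailI F b

open Set Topology

theorem SlowlyVarying.tendsto_div_of_eq_mul_rpow {L g : ℝ → ℝ} (hL : SlowlyVarying L)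
    (hLpos : ∀ x > 0, 0 < L x) {α : ℝ} (hg : ∀ x > 0, g x = L x * x ^ (-α)) {t : ℝ}
    (ht : 0 < t) : Tendsto (fun x => g (t * x) / g x) atTop (𝓝 (t ^ (-α))) := by
  refine ((hL t ht).mul_const (t ^ (-α))).congr' ?_ |>.trans (by rw [one_mul])
  filter_upwards [eventually_gt_atTop 0] with x hx
  have hLx := (hLpos x hx).ne'
  have hxα := (Real.rpow_pos_of_pos hx (-α)).ne'
  rw [hg _ (mul_pos ht hx), hg _ hx, Real.mul_rpow ht.le hx.le]
  field_simp

theorem eventually_le_mul_of_tendsto_div {g : ℝ → ℝ} (hg : ∀ᶠ x in atTop, 0 < g x) {t l ρ : ℝ}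
    (h : Tendsto (fun x => g (t * x) / g x) atTop (𝓝 l)) (hρ : l < ρ) :
    ∀ᶠ x in atTop, g (t * x) ≤ ρ * g x := by
  filter_upwards [hg, h.eventually_le_const hρ] with x hx hlt
  rwa [div_le_iff₀ hx] at hlt

theorem eventually_mul_le_of_tendsto_div {g : ℝ → ℝ} (hg : ∀ᶠ x in atTop, 0 < g x) {t l ρ : ℝ}
    (h : Tendsto (fun x => g (t * x) / g x) atTop (𝓝 l)) (hρ : ρ < l) :
    ∀ᶠ x in atTop, ρ * g x ≤ g (t * x) := by
  filter_upwards [hg, h.eventually_const_le hρ] with x hx hlt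
  rwa [le_div_iff₀ hx] at hlt

theorem Antitone.integrableOn_Ioi_of_eventually_le_mul {g : ℝ → ℝ} (hg : Antitone g)
    (hg0 : ∀ x, 0 ≤ g x) {ρ : ℝ} (hρ : ρ < 2⁻¹) (h : ∀ᶠ x in atTop, g (2 * x) ≤ ρ * g x)
    (a : ℝ) : IntegrableOn g (Ioi a) := by
  have hcondensed : Summable fun k : ℕ => (2 : ℝ) ^ k * g ((2 ^ k : ℕ) : ℝ) := by
    refine summable_of_ratio_norm_eventually_le (r := 2 * ρ) (by linarith) ?_
    filter_upwards [(tendsto_pow_atTop_atTop_of_one_lt one_lt_two).eventually h] with k hk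
    have hk0 := hg0 ((2 : ℝ) ^ k)
    simp only [Real.norm_eq_abs, Nat.cast_pow, Nat.cast_ofNat]
    rw [abs_of_nonneg (mul_nonneg (by positivity) (hg0 _)), abs_of_nonneg (by positivity),
      pow_succ', mul_assoc]
    calc 2 * (2 ^ k * g (2 * 2 ^ k)) ≤ 2 * (2 ^ k * (ρ * g (2 ^ k))) := by gcongr
      _ = 2 * ρ * (2 ^ k * g (2 ^ k)) := by ring
  have hsum : Summable fun n : ℕ => g n :=
    (summable_condensed_iff_of_nonneg (fun n => hg0 n)
      fun _ _ _ hmn => hg (Nat.cast_le.mpr hmn)).mp hcondensed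
  have hIoi : IntegrableOn g (Ioi 0) :=
    (hg.antitoneOn _).integrableOn_Ioi_zero_of_summable hsum fun t _ => hg0 t
  have hIoc : IntegrableOn g (Ioc a 0) :=
    (hg.locallyIntegrable.integrableOn_isCompact isCompact_Icc).mono_set Ioc_subset_Icc_self
  exact (hIoc.union hIoi).mono_set Ioi_subset_Ioc_union_Ioi

theorem not_summable_sq_mul_of_eventually_mul_le {g : ℝ → ℝ} (hg : Antitone g)
    (hpos : ∀ x > 0, 0 < g x) {r ρ : ℝ} (hr : 1 < r) (hρ : (r ^ 2)⁻¹ < ρ)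
    (h : ∀ᶠ x in atTop, ρ * g x ≤ g (r * x)) {b μ : ℝ} (hb : 0 ≤ b) (hμ : 0 < μ) :
    ¬Summable fun k : ℕ => (r ^ k) ^ 2 * g (b + r ^ k * μ) := by
  have hr0 : 0 < r := by linarith
  have hterm : ∀ k : ℕ, 0 < (r ^ k) ^ 2 * g (b + r ^ k * μ) := fun k =>
    mul_pos (by positivity) (hpos _ (by positivity))
  have hgrowth : 1 < r ^ 2 * ρ := by
    rw [inv_lt_iff_one_lt_mul₀ (by positivity)] at hρ; linarith
  refine not_summable_of_ratio_norm_eventually_ge hgrowth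
    (Eventually.frequently (Eventually.of_forall fun k => (norm_pos_iff.mpr (hterm k).ne').ne'))
    ?_
  have hx : Tendsto (fun k : ℕ => b + r ^ k * μ) atTop atTop :=
    tendsto_atTop_add_const_left _ b
      ((tendsto_pow_atTop_atTop_of_one_lt hr).atTop_mul_const hμ)
  filter_upwards [hx.eventually h] with k hk
  rw [Real.norm_of_nonneg (hterm k).le, Real.norm_of_nonneg (hterm (k + 1)).le]
  -- `b + r ^ (k + 1) * μ ≤ r * (b + r ^ k * μ)` because `b ≥ 0` and `r ≥ 1`
  have hmono : g (r * (b + r ^ k * μ)) ≤ g (b + r ^ (k + 1) * μ) :=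
    hg (by rw [pow_succ]; nlinarith [pow_pos hr0 k])
  calc r ^ 2 * ρ * ((r ^ k) ^ 2 * g (b + r ^ k * μ))
      = (r ^ (k + 1)) ^ 2 * (ρ * g (b + r ^ k * μ)) := by ring
    _ ≤ (r ^ (k + 1)) ^ 2 * g (b + r ^ (k + 1) * μ) := by gcongr; exact hk.trans hmono

theorem rtail_nonneg (F : Measure ℝ) (x : ℝ) : 0 ≤ rtail F x := ENNReal.toReal_nonneg

theorem rtail_antitone (F : Measure ℝ) [IsFiniteMeasure F] : Antitone (rtail F) :=
  fun _ _ hxy => ENNReal.toReal_mono (measure_ne_top F _) (measure_mono (Ioi_subset_Ioi hxy))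

theorem rtailI_nonneg (F : Measure ℝ) (x : ℝ) : 0 ≤ rtailI F x :=
  setIntegral_nonneg measurableSet_Ioi fun u _ => rtail_nonneg F u

theorem rtailI_sub_rtailI {F : Measure ℝ} (hint : ∀ c, IntegrableOn (rtail F) (Ioi c))
    {x y : ℝ} (hxy : x ≤ y) : rtailI F x - rtailI F y = ∫ u in Ioc x y, rtail F u := by
  rw [rtailI, rtailI, ← Ioc_union_Ioi_eq_Ioi hxy,
    setIntegral_union (Ioc_disjoint_Ioi le_rfl) measurableSet_Ioi
      ((hint x).mono_set Ioc_subset_Ioi_self) (hint y), add_sub_cancel_right]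

theorem sub_mul_rtail_le_rtailI_sub {F : Measure ℝ} [IsFiniteMeasure F]
    (hint : ∀ c, IntegrableOn (rtail F) (Ioi c)) {x y : ℝ} (hxy : x ≤ y) :
    (y - x) * rtail F y ≤ rtailI F x - rtailI F y := by
  rw [rtailI_sub_rtailI hint hxy, ← Real.volume_real_Ioc_of_le hxy, ← smul_eq_mul,
    ← setIntegral_const]
  exact setIntegral_mono_on (integrableOn_const measure_Ioc_lt_top.ne)
    ((hint x).mono_set Ioc_subset_Ioi_self) measurableSet_Ioc
    fun u hu => rtail_antitone F hu.2

theorem rtailI_pos {F : Measure ℝ} [IsFiniteMeasure F]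
    (hint : ∀ c, IntegrableOn (rtail F) (Ioi c)) {x y : ℝ} (hxy : x < y)
    (hy : 0 < rtail F y) : 0 < rtailI F x := by
  have := sub_mul_rtail_le_rtailI_sub hint hxy.le
  nlinarith [rtailI_nonneg F y, mul_pos (sub_pos.mpr hxy) hy]

theorem nseq_succ (r k : ℕ) : nseq r (k + 1) = r ^ (k + 1) := if_neg k.succ_ne_zero

theorem two_mul_nseq_le_nseq_succ {r : ℕ} (hr : 1 < r) (k : ℕ) :
    2 * nseq r k ≤ nseq r (k + 1) := by
  rw [nseq_succ, nseq]
  split_ifs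
  · exact Nat.zero_le _
  · rw [pow_succ, mul_comm]; exact Nat.mul_le_mul_left _ hr

theorem div_mul_sq_mul_rtail_le_pk_mul_nseq {F : Measure ℝ} [IsFiniteMeasure F]
    (hint : ∀ c, IntegrableOn (rtail F) (Ioi c)) {μ : ℝ} (hμ : 0 ≤ μ) {r : ℕ} (hr : 1 < r)
    (b : ℝ) (k : ℕ) :
    μ / 2 / rtailI F b * (((r : ℝ) ^ (k + 1)) ^ 2 * rtail F (b + (r : ℝ) ^ (k + 1) * μ)) ≤
      pk F μ r (k + 1) b * (nseq r (k + 1) : ℝ) := by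
  have hn : 2 * (nseq r k : ℝ) ≤ (r : ℝ) ^ (k + 1) := by
    exact_mod_cast nseq_succ r k ▸ two_mul_nseq_le_nseq_succ hr k
  set N : ℝ := (r : ℝ) ^ (k + 1)
  have hN : 0 ≤ N := by positivity
  -- the block `(b + n_k μ, b + n_{k+1} μ]` has length at least `n_{k+1} μ / 2`
  have hblock := sub_mul_rtail_le_rtailI_sub hint
    (x := b + nseq r k * μ) (y := b + N * μ)
    (by nlinarith [Nat.cast_nonneg (α := ℝ) (nseq r k)])
  have hI := rtailI_nonneg F b
  have hT := rtail_nonneg F (b + N * μ)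
  rw [pk, Nat.add_sub_cancel, nseq_succ, Nat.cast_pow]
  calc μ / 2 / rtailI F b * (N ^ 2 * rtail F (b + N * μ))
      = N / 2 * μ * rtail F (b + N * μ) * N / rtailI F b := by ring
    _ ≤ (b + N * μ - (b + nseq r k * μ)) * rtail F (b + N * μ) * N / rtailI F b := by
        gcongr; nlinarith
    _ ≤ (rtailI F (b + nseq r k * μ) - rtailI F (b + N * μ)) * N / rtailI F b := by gcongr
    _ = _ := by ring

/-- If `1 < α < 2`, then for every `b > 0` the expected number of increments generated per
run is infinite: `Σ_{k≥1} p_k(b) n_k = ∞` (i.e. the nonnegative series is not summable). -/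
theorem stmt16
    (F : Measure ℝ) [IsProbabilityMeasure F]
    (α : ℝ) (hα1 : 1 < α) (hα2 : α < 2)
    (L : ℝ → ℝ) (hLpos : ∀ x > 0, 0 < L x) (hL : SlowlyVarying L)
    (htail : ∀ x > 0, rtail F x = L x * x ^ (-α))
    (μ : ℝ) (hμ : 0 < μ) (r : ℕ) (hr : 1 < r) :
    ∀ b > (0 : ℝ),
      ¬ Summable (fun k : ℕ => pk F μ r (k + 1) b * (nseq r (k + 1) : ℝ)) := by
  intro b hb hsum
  have hr' : (1 : ℝ) < r := by exact_mod_cast hr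
  have hpos : ∀ x > 0, 0 < rtail F x := fun x hx => by
    rw [htail x hx]; exact mul_pos (hLpos x hx) (Real.rpow_pos_of_pos hx _)
  have hpos' : ∀ᶠ x in atTop, 0 < rtail F x := (eventually_gt_atTop 0).mono hpos
  have hratio {t : ℝ} (ht : 0 < t) := hL.tendsto_div_of_eq_mul_rpow hLpos htail ht
  obtain ⟨ρ, hαρ, hρ⟩ : ∃ ρ, (2 : ℝ) ^ (-α) < ρ ∧ ρ < 2⁻¹ := exists_between <| by
    simpa [Real.rpow_neg_one] using
      Real.rpow_lt_rpow_of_exponent_lt one_lt_two (neg_lt_neg hα1)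
  have hint : ∀ c, IntegrableOn (rtail F) (Ioi c) :=
    (rtail_antitone F).integrableOn_Ioi_of_eventually_le_mul (rtail_nonneg F) hρ
      (eventually_le_mul_of_tendsto_div hpos' (hratio two_pos) hαρ)
  obtain ⟨σ, hσ, hσα⟩ : ∃ σ, ((r : ℝ) ^ 2)⁻¹ < σ ∧ σ < (r : ℝ) ^ (-α) := exists_between <| by
    simpa [Real.rpow_neg, Real.rpow_two] using
      Real.rpow_lt_rpow_of_exponent_lt hr' (neg_lt_neg hα2)
  have hdiv := not_summable_sq_mul_of_eventually_mul_le (rtail_antitone F) hpos hr' hσ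
    (eventually_mul_le_of_tendsto_div hpos' (hratio (by linarith)) hσα) hb.le hμ
  have hI : 0 < rtailI F b := rtailI_pos hint (lt_add_one b) (hpos _ (by linarith))
  refine hdiv <| (summable_nat_add_iff 1).mp <| (summable_mul_left_iff (by positivity)).mp <|
    hsum.of_nonneg_of_le (fun k => ?_) (div_mul_sq_mul_rtail_le_pk_mul_nseq hint hμ.le hr b)
  exact mul_nonneg (by positivity) (mul_nonneg (by positivity) (rtail_nonneg F _))
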